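/- Let 𝔖 be a collection of subsets of a set S with |S| = n ≤ 6 such that for any r, s ∈ 𝔖 one has |r △ s| ∈ {0, 4, 6}. Then |𝔖| ≤ 1, 1, 1, 2, 2, 4 for n = 1, 2, 3, 4, 5, 6 respectively. -/

import Mathlib

/-!
This is the Plotkin bound for binary codes of minimum distance `4`. Distinct members are at
distance `|r △ s| ≥ 4`. Writing `ε_r x = ±1` according as `x ∈ r`, we have
`ε_r x * ε_s x = 1 - 2 [x ∈ r △ s]`, so for `m = |𝔖|`
`0 ≤ ∑ x ∈ S, (∑ r, ε_r x)² = ∑ r, ∑ s, (n - 2 |r △ s|) ≤ n m² - 8 m (m - 1)`,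
that is `m (8 - n) ≤ 8`, which gives `m ≤ 1, 1, 1, 2, 2, 4` for `n = 1, …, 6`.
-/

open Finset

namespace Finset

variable {α : Type*} [DecidableEq α] {S : Finset α}

lemma sum_ite_mem_mul_ite_mem {r s : Finset α} (hr : r ⊆ S) (hs : s ⊆ S) :
    ∑ x ∈ S, (if x ∈ r then 1 else -1 : ℤ) * (if x ∈ s then 1 else -1) =
      #S - 2 * #(symmDiff r s) := by
  have hterm : ∀ x ∈ S, (if x ∈ r then 1 else -1 : ℤ) * (if x ∈ s then 1 else -1) =
      1 - 2 * (if x ∈ symmDiff r s then 1 else 0) := by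
    intro x _
    by_cases hxr : x ∈ r <;> by_cases hxs : x ∈ s <;> simp [mem_symmDiff, hxr, hxs]
  have hsub : symmDiff r s ⊆ S := symmDiff_le_sup.trans (union_subset hr hs)
  rw [sum_congr rfl hterm, sum_sub_distrib, ← mul_sum, sum_boole, filter_mem_eq_inter,
    inter_eq_right.2 hsub]
  simp

lemma two_mul_sum_sum_card_symmDiff_le {𝔖 : Finset (Finset α)} (hsub : ∀ s ∈ 𝔖, s ⊆ S) :
    2 * ∑ r ∈ 𝔖, ∑ s ∈ 𝔖, #(symmDiff r s) ≤ #S * #𝔖 ^ 2 := by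
  set ε : Finset α → α → ℤ := fun r x => if x ∈ r then 1 else -1
  have hsq : 0 ≤ ∑ x ∈ S, (∑ r ∈ 𝔖, ε r x) ^ 2 := sum_nonneg fun _ _ => sq_nonneg _
  have hexpand : ∑ x ∈ S, (∑ r ∈ 𝔖, ε r x) ^ 2 =
      ∑ r ∈ 𝔖, ∑ s ∈ 𝔖, ((#S : ℤ) - 2 * #(symmDiff r s)) := by
    simp_rw [sq, sum_mul_sum]
    rw [sum_comm]
    refine sum_congr rfl fun r hr => ?_
    rw [sum_comm]
    exact sum_congr rfl fun s hs => sum_ite_mem_mul_ite_mem (hsub r hr) (hsub s hs)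
  rw [hexpand] at hsq
  simp only [sum_sub_distrib, sum_const, ← mul_sum, nsmul_eq_mul] at hsq
  zify
  linarith

theorem plotkin_bound {𝔖 : Finset (Finset α)} {d : ℕ} (hsub : ∀ s ∈ 𝔖, s ⊆ S)
    (hdist : ∀ r ∈ 𝔖, ∀ s ∈ 𝔖, r ≠ s → d ≤ #(symmDiff r s)) :
    2 * d * (#𝔖 - 1) ≤ #S * #𝔖 := by
  have hlower : #𝔖 * ((#𝔖 - 1) * d) ≤ ∑ r ∈ 𝔖, ∑ s ∈ 𝔖, #(symmDiff r s) := by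
    rw [← smul_eq_mul, ← sum_const]
    refine sum_le_sum fun r hr => ?_
    calc (#𝔖 - 1) * d = ∑ s ∈ 𝔖.erase r, d := by rw [sum_const, card_erase_of_mem hr, smul_eq_mul]
      _ ≤ ∑ s ∈ 𝔖.erase r, #(symmDiff r s) :=
          sum_le_sum fun s hs => hdist r hr s (mem_of_mem_erase hs) (ne_of_mem_erase hs).symm
      _ ≤ ∑ s ∈ 𝔖, #(symmDiff r s) := sum_le_sum_of_subset (erase_subset r 𝔖)
  have hupper := two_mul_sum_sum_card_symmDiff_le hsub
  rcases Nat.eq_zero_or_pos #𝔖 with h | hpos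
  · simp [h]
  · refine Nat.le_of_mul_le_mul_left ?_ hpos
    calc #𝔖 * (2 * d * (#𝔖 - 1)) = 2 * (#𝔖 * ((#𝔖 - 1) * d)) := by ring
      _ ≤ #S * #𝔖 ^ 2 := (Nat.mul_le_mul_left 2 hlower).trans hupper
      _ = #𝔖 * (#S * #𝔖) := by ring

end Finset

theorem subset_system_card_le_six_general {α : Type*} [DecidableEq α] (S : Finset α)
    (n : ℕ) (hn6 : n ≤ 6) (hS : S.card = n)
    (𝔖 : Finset (Finset α)) (hsub : ∀ s ∈ 𝔖, s ⊆ S)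
    (hdiff : ∀ r ∈ 𝔖, ∀ s ∈ 𝔖, (symmDiff r s).card ∈ ({0, 4, 6} : Set ℕ)) :
    𝔖.card ≤ [1, 1, 1, 2, 2, 4].getD (n - 1) 0 := by
  have hdist : ∀ r ∈ 𝔖, ∀ s ∈ 𝔖, r ≠ s → 4 ≤ (symmDiff r s).card := by
    intro r hr s hs hne
    have hpos : (symmDiff r s).card ≠ 0 := by
      rwa [Ne, card_eq_zero, ← bot_eq_empty, symmDiff_eq_bot]
    have h := hdiff r hr s hs
    simp only [Set.mem_insert_iff, Set.mem_singleton_iff] at h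
    omega
  have hplotkin := plotkin_bound hsub hdist
  subst hS
  interval_cases S.card <;> simp <;> omega

/-- The cases n ≤ 6 of Lemma `lem.max.set.D`. -/
theorem subset_system_card_le_six {α : Type*} [DecidableEq α] (S : Finset α)
    (n : ℕ) (hn1 : 1 ≤ n) (hn6 : n ≤ 6) (hS : S.card = n)
    (𝔖 : Finset (Finset α)) (hsub : ∀ s ∈ 𝔖, s ⊆ S)
    (hdiff : ∀ r ∈ 𝔖, ∀ s ∈ 𝔖, (symmDiff r s).card ∈ ({0, 4, 6} : Set ℕ)) :
    𝔖.card ≤ [1, 1, 1, 2, 2, 4].getD (n - 1) 0 :=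
  subset_system_card_le_six_general S n hn6 hS 𝔖 hsub hdiff
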